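/- Let G be a finite group, H ≤ G, and u_H ∈ B(H) ⊗ ℚ the primitive idempotent of the rational Burnside ring of H supported at H. Then Res^G_H(Ind^G_H(u_H)) = |N_G(H)/H| · u_H. -/

import Mathlib

open Pointwise Finsupp

noncomputable section

/-- Conjugacy classes of subgroups of `G`. -/
def SubgroupConj (G : Type*) [Group G] : Type _ :=
  Quotient (MulAction.orbitRel (ConjAct G) (Subgroup G))

variable {G : Type*} [Group G]

/-- The conjugacy class of a subgroup. -/
def Subgroup.toConj (K : Subgroup G) : SubgroupConj G :=
  Quotient.mk (MulAction.orbitRel (ConjAct G) (Subgroup G)) K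

/-- A representative of a conjugacy class of subgroups. -/
def SubgroupConj.rep (c : SubgroupConj G) : Subgroup G := Quotient.out c

instance : DecidableEq (SubgroupConj G) := Classical.decEq _

instance [Finite G] : Finite (Subgroup G) :=
  Finite.of_injective (fun H => (H : Set G)) fun _ _ h => SetLike.ext' h

instance [Finite G] : Finite (SubgroupConj G) := Quotient.finite _

noncomputable instance [Finite G] : Fintype (SubgroupConj G) := Fintype.ofFinite _

instance [Finite G] (s t : Set G) : Finite (DoubleCoset.Quotient s t) :=
  Quotient.finite _

noncomputable instance [Finite G] (s t : Set G) : Fintype (DoubleCoset.Quotient s t) :=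
  Fintype.ofFinite _

/-- The conjugate subgroup `g K g⁻¹`. -/
def conjSub (g : G) (K : Subgroup G) : Subgroup G :=
  Subgroup.map (MulAut.conj g).toMonoidHom K

/-- The rational Burnside ring of `G`, as the free `ℚ`-module on the classes `[G/Γ]`. -/
abbrev BQ (G : Type*) [Group G] := SubgroupConj G →₀ ℚ

variable [Finite G]

/-- The double coset formula for the product of two basis elements
`⟨Γ⟩⟨Γ'⟩ = Σ_{g ∈ Γ'\G\Γ} ⟨Γ ∩ g⁻¹ Γ' g⟩`. -/
def basisMul (c d : SubgroupConj G) : BQ G :=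
  ∑ q : DoubleCoset.Quotient (d.rep : Set G) (c.rep : Set G),
    Finsupp.single (Subgroup.toConj (c.rep ⊓ conjSub (Quotient.out q)⁻¹ d.rep)) 1

/-- The multiplication of the Burnside ring in the basis `[G/Γ]`. -/
def mulB (x y : BQ G) : BQ G :=
  x.sum fun c a => y.sum fun d b => (a * b) • basisMul c d

/-- The unit `[G/G]` of the Burnside ring. -/
def oneB : BQ G := Finsupp.single (Subgroup.toConj (⊤ : Subgroup G)) 1

/-- Induction along an (injective) group homomorphism. -/
def indF {H : Type*} [Group H] (f : H →* G) (y : BQ H) : BQ G :=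
  y.sum fun c a => Finsupp.single (Subgroup.toConj (c.rep.map f)) a

/-- Restriction of the basis element `[G/Γ]` along `f : H →* G`:
`Res [G/Γ] = Σ_{g ∈ f(H)\G/Γ} [H / f⁻¹(g Γ g⁻¹)]`. -/
def resBasis {H : Type*} [Group H] (f : H →* G) (c : SubgroupConj G) : BQ H :=
  ∑ q : DoubleCoset.Quotient (f.range : Set G) (c.rep : Set G),
    Finsupp.single (Subgroup.toConj ((conjSub (Quotient.out q) c.rep).comap f)) 1

/-- Restriction along a group homomorphism. -/
def resF {H : Type*} [Group H] (f : H →* G) (x : BQ G) : BQ H :=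
  x.sum fun c a => a • resBasis f c

/-- The mark of the basis element `[G/Γ]` at (the class of) `Δ`: the number of
`Δ`-fixed points of `G/Γ`. -/
def markBasis (c d : SubgroupConj G) : ℚ :=
  (Nat.card {x : G ⧸ c.rep // ∀ k ∈ d.rep, k • x = x} : ℚ)

/-- The mark homomorphism, in the basis `[G/Γ]`. -/
def markMap (x : BQ G) : SubgroupConj G → ℚ :=
  fun d => x.sum fun c a => a * markBasis c d

/-- `x` is the primitive idempotent of `B(G) ⊗ ℚ` supported at the full subgroup:
its mark at `G` is `1` and its marks at all proper subgroups vanish. -/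
def IsTopIdem (x : BQ G) : Prop :=
  markMap x = fun d => if d = Subgroup.toConj (⊤ : Subgroup G) then 1 else 0

/-- `|N_G(H)/H|`. -/
def nuG (H : Subgroup G) : ℕ :=
  Nat.card ((Subgroup.normalizer (H : Set G)) ⧸ H.subgroupOf (Subgroup.normalizer (H : Set G)))


/-- The conjugation isomorphism `H → gHg⁻¹`, as a monoid homomorphism. -/
def conjHom (g : G) (H : Subgroup G) : ↥H →* ↥(conjSub g H) :=
  ((MulAut.conj g).toMonoidHom.comp H.subtype).codRestrict (conjSub g H)
    (fun h => Subgroup.mem_map_of_mem _ h.2)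

/-- Conjugation by an element of the normalizer of `H`, as an endomorphism of `H`. -/
def normConjHom (H : Subgroup G) (n : G) (hn : n ∈ Subgroup.normalizer (H : Set G)) : ↥H →* ↥H :=
  ((MulAut.conj n).toMonoidHom.comp H.subtype).codRestrict H
    (fun h => by simpa using (Subgroup.mem_normalizer_iff.mp hn ↑h).mp h.2)

/-!
Marks determine elements of `B(H) ⊗ ℚ`, so it suffices to compare marks at every `D ≤ H`.
The mark of `Res x` at `D` is the mark of `x` at `D`, by the Mackey decomposition of `G/Γ` into
`H`-orbits. Splitting `G/Γ` (for `Γ ≤ H`) along `G/H` expresses the mark of `Ind y` at `K ≤ G` as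
the sum, over the cosets `τH` with `τ⁻¹Kτ ≤ H`, of the marks of `y` at `τ⁻¹Kτ`. For `y = u_H` only
the cosets with `τ⁻¹Kτ = H` survive; for `K = D ≤ H` this forces `D = H` and `τ ∈ N_G(H)`, which
leaves `|N_G(H)/H|` at `D = H` and `0` elsewhere.
-/

section Conjugation

variable {G H : Type*} [Group G] [Group H]

theorem mem_conjSub {g x : G} {K : Subgroup G} : x ∈ conjSub g K ↔ g⁻¹ * x * g ∈ K := by
  constructor
  · rintro ⟨y, hy, rfl⟩
    simpa [MulAut.conj_apply, mul_assoc] using hy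
  · intro h
    exact ⟨g⁻¹ * x * g, h, by simp [MulAut.conj_apply, mul_assoc]⟩

theorem conjSub_conjSub (a b : G) (K : Subgroup G) :
    conjSub a (conjSub b K) = conjSub (a * b) K := by
  ext x
  simp only [mem_conjSub, mul_assoc, mul_inv_rev]

theorem conjSub_one (K : Subgroup G) : conjSub 1 K = K := by
  ext x
  simp [mem_conjSub]

theorem conjSub_top (g : G) : conjSub g (⊤ : Subgroup G) = ⊤ := by
  ext x
  simp [mem_conjSub]

theorem conjSub_le_conjSub_iff {g : G} {A B : Subgroup G} :
    conjSub g A ≤ conjSub g B ↔ A ≤ B :=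
  Subgroup.map_le_map_iff_of_injective (MulAut.conj g).injective

theorem conjSub_le_iff {g : G} {A B : Subgroup G} : conjSub g A ≤ B ↔ A ≤ conjSub g⁻¹ B := by
  rw [← conjSub_le_conjSub_iff (g := g⁻¹), conjSub_conjSub, inv_mul_cancel, conjSub_one]

theorem map_conjSub (f : H →* G) (h : H) (A : Subgroup H) :
    (conjSub h A).map f = conjSub (f h) (A.map f) := by
  simp only [conjSub, Subgroup.map_map]
  congr 1
  ext x
  simp [MulAut.conj_apply]

theorem natCard_conjSub (g : G) (K : Subgroup G) : Nat.card (conjSub g K) = Nat.card K :=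
  Subgroup.card_map_of_injective (MulAut.conj g).injective

theorem conjSub_eq_self_iff {g : G} {K : Subgroup G} :
    conjSub g K = K ↔ g ∈ Subgroup.normalizer (K : Set G) := by
  rw [Subgroup.mem_normalizer_iff'', SetLike.ext_iff]
  exact forall_congr' fun x => by rw [mem_conjSub]; exact Iff.comm

theorem conjSub_eq_smul (g : G) (K : Subgroup G) : conjSub g K = ConjAct.toConjAct g • K := by
  ext x
  rw [Subgroup.mem_pointwise_smul_iff_inv_smul_mem, mem_conjSub, ConjAct.smul_def]
  simp [mul_assoc]

theorem toConj_eq_toConj_iff {K L : Subgroup G} :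
    Subgroup.toConj K = Subgroup.toConj L ↔ ∃ g : G, conjSub g L = K := by
  refine Quotient.eq.trans
    ⟨fun ⟨g, hg⟩ => ⟨ConjAct.ofConjAct g, ?_⟩, fun ⟨g, hg⟩ => ⟨ConjAct.toConjAct g, ?_⟩⟩
  · rwa [conjSub_eq_smul, ConjAct.toConjAct_ofConjAct]
  · rw [← hg, conjSub_eq_smul]

theorem toConj_rep (c : SubgroupConj G) : Subgroup.toConj c.rep = c := Quotient.out_eq c

theorem exists_rep_toConj_eq (K : Subgroup G) : ∃ g : G, (Subgroup.toConj K).rep = conjSub g K := by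
  obtain ⟨g, hg⟩ := toConj_eq_toConj_iff.mp (toConj_rep (Subgroup.toConj K))
  exact ⟨g, hg.symm⟩

theorem toConj_eq_toConj_top_iff {K : Subgroup G} :
    Subgroup.toConj K = Subgroup.toConj (⊤ : Subgroup G) ↔ K = ⊤ := by
  refine ⟨fun h => ?_, fun h => h ▸ rfl⟩
  obtain ⟨g, hg⟩ := toConj_eq_toConj_iff.mp h
  rw [← hg, conjSub_top]

theorem rep_eq_top_iff {c : SubgroupConj G} : c.rep = ⊤ ↔ c = Subgroup.toConj ⊤ := by
  rw [← toConj_eq_toConj_top_iff, toConj_rep]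

end Conjugation

section Marks

variable {G : Type*} [Group G]

def Subgroup.mark (Γ D : Subgroup G) : ℚ :=
  Nat.card {x : G ⧸ Γ // ∀ k ∈ D, k • x = x}

theorem mk_fixed_iff {Γ D : Subgroup G} {a : G} :
    (∀ k ∈ D, k • (a : G ⧸ Γ) = a) ↔ conjSub a⁻¹ D ≤ Γ := by
  rw [conjSub, Subgroup.map_le_iff_le_comap]
  refine forall₂_congr fun k _ => ?_
  rw [MulAction.Quotient.smul_mk, QuotientGroup.eq, ← inv_mem_iff]
  simp [mul_assoc]

theorem natCard_eq_mark {Γ D : Subgroup G} (P : G ⧸ Γ → Prop)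
    (hP : ∀ a : G, P a ↔ conjSub a⁻¹ D ≤ Γ) : (Nat.card {x // P x} : ℚ) = Γ.mark D := by
  rw [Subgroup.mark, Nat.card_congr (Equiv.subtypeEquivRight fun x => ?_)]
  induction x using QuotientGroup.induction_on with
  | H a => rw [hP, mk_fixed_iff]

def quotConjEquiv (Γ : Subgroup G) (g : G) : G ⧸ Γ ≃ G ⧸ conjSub g Γ :=
  Quotient.congr (Equiv.mulRight g⁻¹) fun a b => by
    rw [QuotientGroup.leftRel_apply, QuotientGroup.leftRel_apply, mem_conjSub]
    simp [mul_assoc]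

theorem quotConjEquiv_mk (Γ : Subgroup G) (g a : G) :
    quotConjEquiv Γ g a = ((a * g⁻¹ : G) : G ⧸ conjSub g Γ) := rfl

theorem mark_conjSub_left (g : G) (Γ D : Subgroup G) : (conjSub g Γ).mark D = Γ.mark D := by
  rw [Subgroup.mark, ← Nat.card_congr (quotConjEquiv Γ g).subtypeEquivOfSubtype]
  refine natCard_eq_mark _ fun a => ?_
  rw [quotConjEquiv_mk, mk_fixed_iff, mul_inv_rev, inv_inv, ← conjSub_conjSub,
    conjSub_le_conjSub_iff]

theorem mark_conjSub_right (g : G) (Γ D : Subgroup G) : Γ.mark (conjSub g D) = Γ.mark D := by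
  rw [Subgroup.mark,
    ← Nat.card_congr (MulAction.toPerm g : Equiv.Perm (G ⧸ Γ)).subtypeEquivOfSubtype]
  refine natCard_eq_mark _ fun a => ?_
  rw [MulAction.toPerm_apply, MulAction.Quotient.smul_mk, mk_fixed_iff, conjSub_conjSub,
    smul_eq_mul, mul_inv_rev, inv_mul_cancel_right]

theorem mark_rep_left (K D : Subgroup G) : (Subgroup.toConj K).rep.mark D = K.mark D := by
  obtain ⟨g, hg⟩ := exists_rep_toConj_eq K
  rw [hg, mark_conjSub_left]

theorem mark_rep_right (Γ K : Subgroup G) : Γ.mark (Subgroup.toConj K).rep = Γ.mark K := by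
  obtain ⟨g, hg⟩ := exists_rep_toConj_eq K
  rw [hg, mark_conjSub_right]

theorem mark_ne_zero_iff [Finite G] {Γ D : Subgroup G} :
    Γ.mark D ≠ 0 ↔ ∃ a : G, conjSub a D ≤ Γ := by
  rw [Subgroup.mark, Nat.cast_ne_zero, Nat.card_ne_zero, and_iff_left Subtype.finite,
    nonempty_subtype, QuotientGroup.mk_surjective.exists]
  simp only [mk_fixed_iff]
  exact ⟨fun ⟨a, ha⟩ => ⟨a⁻¹, ha⟩, fun ⟨a, ha⟩ => ⟨a⁻¹, by rwa [inv_inv]⟩⟩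

end Marks

section MarkMap

variable {G : Type*} [Group G]

theorem markMap_eq_linearCombination (x : BQ G) (d : SubgroupConj G) :
    markMap x d = Finsupp.linearCombination ℚ (fun c => markBasis c d) x := by
  rw [Finsupp.linearCombination_apply]
  rfl

theorem markMap_smul (a : ℚ) (x : BQ G) (d : SubgroupConj G) :
    markMap (a • x) d = a * markMap x d := by
  simp only [markMap_eq_linearCombination, map_smul, smul_eq_mul]

theorem markMap_sub (x y : BQ G) (d : SubgroupConj G) :
    markMap (x - y) d = markMap x d - markMap y d := by
  simp only [markMap_eq_linearCombination, map_sub]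

theorem markBasis_toConj_left (K : Subgroup G) (d : SubgroupConj G) :
    markBasis (Subgroup.toConj K) d = K.mark d.rep :=
  mark_rep_left K d.rep

theorem markBasis_toConj_right (c : SubgroupConj G) (K : Subgroup G) :
    markBasis c (Subgroup.toConj K) = c.rep.mark K :=
  mark_rep_right c.rep K

open scoped Classical in
theorem IsTopIdem.markMap_toConj {u : BQ G} (hu : IsTopIdem u) (L : Subgroup G) :
    markMap u (Subgroup.toConj L) = if L = ⊤ then 1 else 0 := by
  rw [congrFun hu]
  simp only [toConj_eq_toConj_top_iff]

variable [Finite G]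

theorem markBasis_self_ne_zero (c : SubgroupConj G) : markBasis c c ≠ 0 :=
  mark_ne_zero_iff.mpr ⟨1, (conjSub_one c.rep).le⟩

theorem SubgroupConj.eq_of_markBasis_ne_zero {c d : SubgroupConj G} (h : markBasis c d ≠ 0)
    (hcard : Nat.card c.rep ≤ Nat.card d.rep) : c = d := by
  obtain ⟨a, ha⟩ := mark_ne_zero_iff.mp h
  have hconj : conjSub a d.rep = c.rep :=
    Subgroup.eq_of_le_of_card_ge ha (by rwa [natCard_conjSub])
  rw [← toConj_rep c, ← toConj_rep d, ← hconj]
  exact toConj_eq_toConj_iff.mpr ⟨a, rfl⟩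

/-- Evaluating at a class `c` of maximal order in the support of `x` isolates the coefficient
`x c`: the mark matrix is triangular with nonzero diagonal. -/
theorem eq_zero_of_markMap_eq_zero {x : BQ G} (hx : ∀ d, markMap x d = 0) : x = 0 := by
  by_contra hne
  obtain ⟨c, hc, hmax⟩ := x.support.exists_max_image (fun d => Nat.card d.rep)
    (Finsupp.support_nonempty_iff.mpr hne)
  have hmark : markMap x c = x c * markBasis c c := by
    rw [markMap, Finsupp.sum, Finset.sum_eq_single c]
    · intro e he hec
      by_contra hterm
      exact hec (SubgroupConj.eq_of_markBasis_ne_zero (right_ne_zero_of_mul hterm) (hmax e he))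
    · intro hc'
      rw [Finsupp.notMem_support_iff.mp hc', zero_mul]
  exact mul_ne_zero (Finsupp.mem_support_iff.mp hc) (markBasis_self_ne_zero c)
    (hmark ▸ hx c)

theorem markMap_injective : Function.Injective (markMap : BQ G → SubgroupConj G → ℚ) := by
  intro x y h
  rw [← sub_eq_zero]
  exact eq_zero_of_markMap_eq_zero fun d => by rw [markMap_sub, h, sub_self]

end MarkMap

theorem natCard_subtype_eq_sum {B X : Type*} [Fintype B] {Y : B → Type*} [∀ b, Finite (Y b)]
    (ψ : (Σ b, Y b) → X) (hψ : Function.Bijective ψ) (P : X → Prop) :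
    Nat.card {x // P x} = ∑ b, Nat.card {y : Y b // P (ψ ⟨b, y⟩)} := by
  rw [← Nat.card_sigma]
  refine Nat.card_congr ((Equiv.ofBijective ψ hψ).subtypeEquivOfSubtype.symm.trans ?_)
  exact
    { toFun := fun p => ⟨p.1.1, p.1.2, p.2⟩
      invFun := fun p => ⟨⟨p.1, p.2.1⟩, p.2.2⟩
      left_inv := fun _ => rfl
      right_inv := fun _ => rfl }

section Mackey

variable {G H : Type*} [Group G] [Group H]

def quotientMapMul (f : H →* G) (a b : G) {A : Subgroup H} {B : Subgroup G}
    (hAB : A.map f ≤ conjSub b B) : H ⧸ A → G ⧸ B :=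
  Quotient.map' (fun h => a * f h * b) fun h h' hh => by
    rw [QuotientGroup.leftRel_apply] at hh ⊢
    simpa [mul_assoc] using mem_conjSub.mp (hAB ⟨_, hh, rfl⟩)

theorem quotientMapMul_mk (f : H →* G) (a b : G) {A : Subgroup H} {B : Subgroup G}
    (hAB : A.map f ≤ conjSub b B) (h : H) :
    quotientMapMul f a b hAB h = ((a * f h * b : G) : G ⧸ B) := rfl

theorem conjSub_mul_map_le_iff (f : H →* G) (h : H) (g : G) (D : Subgroup H) (Γ : Subgroup G) :
    conjSub (f h * g)⁻¹ (D.map f) ≤ Γ ↔ conjSub h⁻¹ D ≤ (conjSub g Γ).comap f := by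
  rw [← Subgroup.map_le_iff_le_comap, map_conjSub, mul_inv_rev, ← conjSub_conjSub, conjSub_le_iff,
    inv_inv, map_inv]

/-- The decomposition of the `H`-set `G ⧸ Γ` into the orbits `H ⧸ f⁻¹(gΓg⁻¹)`, one for each
double coset `f(H) g Γ`. -/
def mackeyMap (f : H →* G) (Γ : Subgroup G) :
    (Σ q : DoubleCoset.Quotient (f.range : Set G) (Γ : Set G),
      H ⧸ (conjSub (Quotient.out q) Γ).comap f) → G ⧸ Γ :=
  fun p => quotientMapMul f 1 (Quotient.out p.1) (Subgroup.map_comap_le _ _) p.2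

theorem mackeyMap_mk (f : H →* G) (Γ : Subgroup G)
    (q : DoubleCoset.Quotient (f.range : Set G) (Γ : Set G)) (h : H) :
    mackeyMap f Γ ⟨q, h⟩ = ((f h * Quotient.out q : G) : G ⧸ Γ) := by
  rw [mackeyMap, quotientMapMul_mk, one_mul]

theorem mackeyMap_bijective (f : H →* G) (Γ : Subgroup G) :
    Function.Bijective (mackeyMap f Γ) := by
  constructor
  · rintro ⟨q, y⟩ ⟨q', y'⟩ hyy
    obtain ⟨h, rfl⟩ := QuotientGroup.mk_surjective y
    obtain ⟨h', rfl⟩ := QuotientGroup.mk_surjective y'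
    rw [mackeyMap_mk, mackeyMap_mk, QuotientGroup.eq] at hyy
    have hq : q = q' := by
      rw [← DoubleCoset.out_eq' f.range Γ q, ← DoubleCoset.out_eq' f.range Γ q', DoubleCoset.eq]
      refine ⟨f (h'⁻¹ * h), ⟨_, rfl⟩, _, hyy, ?_⟩
      simp only [map_mul, map_inv]
      group
    subst hq
    refine congrArg (Sigma.mk q) (QuotientGroup.eq.mpr ?_)
    rw [Subgroup.mem_comap, mem_conjSub]
    simpa [mul_assoc] using hyy
  · intro x
    obtain ⟨a, rfl⟩ := QuotientGroup.mk_surjective x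
    obtain ⟨_, k, ⟨e, rfl⟩, hk, hout⟩ := DoubleCoset.mk_out_eq_mul f.range Γ a
    refine ⟨⟨DoubleCoset.mk f.range Γ a, (e⁻¹ : H)⟩, ?_⟩
    rw [mackeyMap_mk, hout, QuotientGroup.eq]
    simpa [mul_assoc] using inv_mem hk

theorem sum_mark_comap_conjSub [Finite G] [Finite H] (f : H →* G) (Γ : Subgroup G)
    (D : Subgroup H) :
    ∑ q : DoubleCoset.Quotient (f.range : Set G) (Γ : Set G),
      ((conjSub (Quotient.out q) Γ).comap f).mark D = Γ.mark (D.map f) := by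
  rw [Subgroup.mark, natCard_subtype_eq_sum _ (mackeyMap_bijective f Γ), Nat.cast_sum]
  refine Finset.sum_congr rfl fun q _ => (natCard_eq_mark _ fun h => ?_).symm
  rw [mackeyMap_mk, mk_fixed_iff, conjSub_mul_map_le_iff]

end Mackey

section Restriction

variable {G H : Type*} [Group G] [Group H] [Finite G] [Finite H]

theorem markMap_resBasis (f : H →* G) (c : SubgroupConj G) (d : SubgroupConj H) :
    markMap (resBasis f c) d = markBasis c (Subgroup.toConj (d.rep.map f)) := by
  rw [markMap_eq_linearCombination, resBasis, map_sum, markBasis_toConj_right,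
    ← sum_mark_comap_conjSub]
  simp only [linearCombination_single, one_smul, markBasis_toConj_left]

theorem markMap_resF (f : H →* G) (x : BQ G) (d : SubgroupConj H) :
    markMap (resF f x) d = markMap x (Subgroup.toConj (d.rep.map f)) := by
  rw [markMap_eq_linearCombination, resF, map_finsuppSum]
  refine Finsupp.sum_congr fun c _ => ?_
  rw [map_smul, smul_eq_mul, ← markMap_eq_linearCombination, markMap_resBasis]

end Restriction

noncomputable instance {G : Type*} [Group G] [Finite G] (K : Subgroup G) : Fintype (G ⧸ K) :=
  Fintype.ofFinite _

section Induction

variable {G H : Type*} [Group G] [Group H]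

theorem conjSub_le_map_iff {f : H →* G} (hf : Function.Injective f) (h : H) (L : Subgroup G)
    (Γ : Subgroup H) :
    conjSub (f h)⁻¹ L ≤ Γ.map f ↔ L ≤ f.range ∧ conjSub h⁻¹ (L.comap f) ≤ Γ := by
  by_cases hL : L ≤ f.range
  · rw [and_iff_right hL, ← Subgroup.map_le_map_iff_of_injective hf, map_conjSub,
      Subgroup.map_comap_eq_self hL, map_inv]
  · rw [conjSub_le_iff, inv_inv, ← map_conjSub]
    exact iff_of_false (fun hle => hL (hle.trans (Subgroup.map_le_range f _))) fun h => hL h.1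

theorem comap_eq_top_iff_range_le (f : H →* G) (L : Subgroup G) : L.comap f = ⊤ ↔ f.range ≤ L := by
  rw [eq_top_iff, ← Subgroup.map_le_iff_le_comap, ← MonoidHom.range_eq_map]

/-- The fibres of `G ⧸ f(Γ) → G ⧸ f(H)` are copies of `H ⧸ Γ`. -/
def indMap (f : H →* G) (Γ : Subgroup H) : (Σ _ : G ⧸ f.range, H ⧸ Γ) → G ⧸ Γ.map f :=
  fun p => quotientMapMul f (Quotient.out p.1) 1 (by rw [conjSub_one]) p.2

theorem indMap_mk (f : H →* G) (Γ : Subgroup H) (t : G ⧸ f.range) (h : H) :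
    indMap f Γ ⟨t, h⟩ = ((Quotient.out t * f h : G) : G ⧸ Γ.map f) := by
  rw [indMap, quotientMapMul_mk, mul_one]

theorem indMap_bijective {f : H →* G} (hf : Function.Injective f) (Γ : Subgroup H) :
    Function.Bijective (indMap f Γ) := by
  constructor
  · rintro ⟨t, y⟩ ⟨t', y'⟩ hyy
    obtain ⟨h, rfl⟩ := QuotientGroup.mk_surjective y
    obtain ⟨h', rfl⟩ := QuotientGroup.mk_surjective y'
    rw [indMap_mk, indMap_mk, QuotientGroup.eq] at hyy
    obtain ⟨γ, hγ, hfγ⟩ := hyy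
    have ht : t = t' := by
      rw [← QuotientGroup.out_eq' t, ← QuotientGroup.out_eq' t', QuotientGroup.eq]
      refine ⟨h * γ * h'⁻¹, ?_⟩
      rw [map_mul, map_mul, hfγ, map_inv]
      group
    subst ht
    refine congrArg (Sigma.mk t) (QuotientGroup.eq.mpr ?_)
    have hγ' : f (h⁻¹ * h') = f γ := by
      rw [hfγ, map_mul, map_inv]
      group
    rwa [hf hγ']
  · intro x
    obtain ⟨a, rfl⟩ := QuotientGroup.mk_surjective x
    obtain ⟨⟨_, e, rfl⟩, he⟩ := QuotientGroup.mk_out_eq_mul f.range a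
    refine ⟨⟨a, (e⁻¹ : H)⟩, ?_⟩
    rw [indMap_mk, he, map_inv, mul_inv_cancel_right]

variable [Finite G] [Finite H]

open scoped Classical in
theorem mark_map_eq_sum {f : H →* G} (hf : Function.Injective f) (Γ : Subgroup H)
    (K : Subgroup G) :
    (Γ.map f).mark K = ∑ t ∈ Finset.univ.filter
      (fun t : G ⧸ f.range => conjSub (Quotient.out t)⁻¹ K ≤ f.range),
        Γ.mark ((conjSub (Quotient.out t)⁻¹ K).comap f) := by
  rw [Subgroup.mark, natCard_subtype_eq_sum _ (indMap_bijective hf Γ), Nat.cast_sum,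
    Finset.sum_filter]
  refine Finset.sum_congr rfl fun t _ => ?_
  have hfixed (h : H) : (∀ k ∈ K, k • indMap f Γ ⟨t, h⟩ = indMap f Γ ⟨t, h⟩) ↔
      conjSub (Quotient.out t)⁻¹ K ≤ f.range ∧
        conjSub h⁻¹ ((conjSub (Quotient.out t)⁻¹ K).comap f) ≤ Γ := by
    rw [indMap_mk, mk_fixed_iff, mul_inv_rev, ← conjSub_conjSub, conjSub_le_map_iff hf]
  split_ifs with hL
  · exact natCard_eq_mark _ fun h => (hfixed h).trans (and_iff_right hL)
  · rw [Nat.cast_eq_zero, Nat.card_eq_zero]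
    refine Or.inl ⟨fun ⟨y, hy⟩ => ?_⟩
    obtain ⟨h, rfl⟩ := QuotientGroup.mk_surjective y
    exact hL ((hfixed h).mp hy).1

open scoped Classical in
theorem markMap_indF {f : H →* G} (hf : Function.Injective f) (y : BQ H) (K : Subgroup G) :
    markMap (indF f y) (Subgroup.toConj K) = ∑ t ∈ Finset.univ.filter
      (fun t : G ⧸ f.range => conjSub (Quotient.out t)⁻¹ K ≤ f.range),
        markMap y (Subgroup.toConj ((conjSub (Quotient.out t)⁻¹ K).comap f)) := by
  rw [markMap_eq_linearCombination, indF, map_finsuppSum]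
  simp only [linearCombination_single, smul_eq_mul, markBasis_toConj_left, mark_rep_right]
  simp only [mark_map_eq_sum hf, Finset.mul_sum]
  rw [Finsupp.sum, Finset.sum_comm]
  refine Finset.sum_congr rfl fun t _ => ?_
  simp only [markMap, Finsupp.sum, markBasis_toConj_right]

theorem markMap_indF_of_isTopIdem {f : H →* G} (hf : Function.Injective f) {u : BQ H}
    (hu : IsTopIdem u) (K : Subgroup G) :
    markMap (indF f u) (Subgroup.toConj K) =
      Nat.card {t : G ⧸ f.range // conjSub (Quotient.out t)⁻¹ K = f.range} := by
  classical
  simp only [markMap_indF hf, hu.markMap_toConj, comap_eq_top_iff_range_le,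
    Finset.sum_boole, Finset.filter_filter, ← le_antisymm_iff, Nat.card_eq_fintype_card,
    Fintype.card_subtype]

end Induction

section Normalizer

variable {G H : Type*} [Group G] [Group H]

theorem natCard_cosets_conjSub_eq_self [Finite G] (L : Subgroup G) :
    Nat.card {t : G ⧸ L // conjSub (Quotient.out t)⁻¹ L = L} = nuG L := by
  refine Nat.card_congr ((Equiv.subtypeEquivRight fun t => ?_).trans
    (Sylow.fixedPointsMulLeftCosetsEquivQuotient L))
  rw [conjSub_eq_self_iff, inv_mem_iff,
    ← Sylow.mem_fixedPoints_mul_left_cosets_iff_mem_normalizer, QuotientGroup.out_eq']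

theorem natCard_cosets_conjSub_map_eq_range_of_ne_top [Finite H] {f : H →* G}
    (hf : Function.Injective f) {D : Subgroup H} (hD : D ≠ ⊤) :
    Nat.card {t : G ⧸ f.range // conjSub (Quotient.out t)⁻¹ (D.map f) = f.range} = 0 := by
  rw [Nat.card_eq_zero]
  refine Or.inl ⟨fun ⟨t, ht⟩ => hD (Subgroup.eq_top_of_card_eq D ?_)⟩
  have hcard := congrArg (fun K : Subgroup G => Nat.card K) ht
  rwa [natCard_conjSub, MonoidHom.range_eq_map, Subgroup.card_map_of_injective hf,
    Subgroup.card_map_of_injective hf, Subgroup.card_top] at hcard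

end Normalizer

/-- If `u_H` is the primitive idempotent of `B(H) ⊗ ℚ` supported at `H`, then
`Res^G_H (Ind^G_H u_H) = |N_G(H)/H| · u_H`. -/
theorem res_ind_of_top_idempotent (G : Type*) [Group G] [Finite G]
    (H : Subgroup G) (u : BQ ↥H) (hu : IsTopIdem u) :
    resF H.subtype (indF H.subtype u) = (nuG H : ℚ) • u := by
  apply markMap_injective
  funext d
  rw [markMap_resF, markMap_indF_of_isTopIdem H.subtype_injective hu, markMap_smul, congrFun hu]
  by_cases hd : d = Subgroup.toConj ⊤
  · rw [if_pos hd, mul_one, rep_eq_top_iff.mpr hd, ← MonoidHom.range_eq_map,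
      natCard_cosets_conjSub_eq_self, Subgroup.range_subtype]
  · rw [if_neg hd, mul_zero,
      natCard_cosets_conjSub_map_eq_range_of_ne_top H.subtype_injective (mt rep_eq_top_iff.mp hd),
      Nat.cast_zero]
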